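/- Let V be a finite-dimensional real vector space, g a nondegenerate symmetric bilinear form on V, b an alternating bilinear form on V and A ∈ V*. Define I : E(V) → E(V) by I(X + η + μ) = X + (η − b(X,·) − A(X)A + 2μA) + (μ − A(X)) for X ∈ V, η ∈ V*, μ ∈ ℝ. Then I is a linear isomorphism satisfying ⟨I(e), I(e')⟩ = ⟨e, e'⟩ for all e, e' ∈ E(V), and I maps the subspace E₋ = {X − (g−b)(X,·) − A(X)A + A(X) : X ∈ V} onto the subspace {X − g(X,·) : X ∈ V}. -/

import Mathlib

/-- The odd generalized tangent space `E(V) = V ⊕ V* ⊕ ℝ`. -/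
abbrev EV (V : Type*) [AddCommGroup V] [Module ℝ V] : Type _ :=
  V × (V →ₗ[ℝ] ℝ) × ℝ

/-- The canonical scalar product of `E(V)`:
`⟨X+ξ+λ, Y+η+μ⟩ = (1/2)(η(X)+ξ(Y)) + λμ`. -/
noncomputable def spEV {V : Type*} [AddCommGroup V] [Module ℝ V]
    (p q : EV V) : ℝ :=
  (1 / 2) * (q.2.1 p.1 + p.2.1 q.1) + p.2.2 * q.2.2

/-!
The map `I` is the composite of the B-field transform by `b`,
`X + η + μ ↦ X + (η − b(X,·)) + μ`, followed by the A-transform by `A`,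
`X + η + μ ↦ X + (η − A(X)A + 2μA) + (μ − A(X))`. Each is an orthogonal automorphism of `E(V)`
(the first because `b` is skew, the second for every `A`), with inverse the transform by `-b`,
resp. `-A`. On `E₋` the B-field transform removes `b` and the A-transform removes `A`.
-/

namespace EV

variable {V : Type*} [AddCommGroup V] [Module ℝ V]

def bTransform (b : LinearMap.BilinForm ℝ V) : EV V →ₗ[ℝ] EV V where
  toFun p := (p.1, p.2.1 - b p.1, p.2.2)
  map_add' p q := by
    simp only [Prod.fst_add, Prod.snd_add, map_add, add_sub_add_comm, Prod.mk_add_mk]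
  map_smul' c p := by
    ext <;> simp [smul_sub]

noncomputable def aTransform (A : V →ₗ[ℝ] ℝ) : EV V →ₗ[ℝ] EV V where
  toFun p := (p.1, p.2.1 - A p.1 • A + (2 * p.2.2) • A, p.2.2 - A p.1)
  map_add' p q := by
    ext
    · rfl
    · simp only [Prod.fst_add, Prod.snd_add, map_add, LinearMap.add_apply, LinearMap.sub_apply,
        LinearMap.smul_apply, smul_eq_mul]
      ring
    · simp only [Prod.fst_add, Prod.snd_add, map_add]
      ring
  map_smul' c p := by
    ext
    · rfl
    · simp only [Prod.smul_fst, Prod.smul_snd, map_smul, LinearMap.add_apply, LinearMap.sub_apply,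
        LinearMap.smul_apply, smul_eq_mul, RingHom.id_apply]
      ring
    · simp only [Prod.smul_fst, Prod.smul_snd, map_smul, smul_eq_mul, RingHom.id_apply]
      ring

@[simp]
theorem bTransform_apply (b : LinearMap.BilinForm ℝ V) (p : EV V) :
    bTransform b p = (p.1, p.2.1 - b p.1, p.2.2) :=
  rfl

@[simp]
theorem aTransform_apply (A : V →ₗ[ℝ] ℝ) (p : EV V) :
    aTransform A p = (p.1, p.2.1 - A p.1 • A + (2 * p.2.2) • A, p.2.2 - A p.1) :=
  rfl

theorem bTransform_neg_bTransform (b : LinearMap.BilinForm ℝ V) (p : EV V) :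
    bTransform (-b) (bTransform b p) = p := by
  ext <;> simp

theorem aTransform_neg_aTransform (A : V →ₗ[ℝ] ℝ) (p : EV V) :
    aTransform (-A) (aTransform A p) = p := by
  ext v
  · rfl
  · simp only [aTransform_apply, LinearMap.neg_apply, LinearMap.sub_apply,
      LinearMap.add_apply, LinearMap.smul_apply, smul_eq_mul]
    ring
  · simp

def bTransformEquiv (b : LinearMap.BilinForm ℝ V) : EV V ≃ₗ[ℝ] EV V where
  __ := bTransform b
  invFun := bTransform (-b)
  left_inv := bTransform_neg_bTransform b
  right_inv p := by ext <;> simp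

noncomputable def aTransformEquiv (A : V →ₗ[ℝ] ℝ) : EV V ≃ₗ[ℝ] EV V where
  __ := aTransform A
  invFun := aTransform (-A)
  left_inv := aTransform_neg_aTransform A
  right_inv p := by
    have h := aTransform_neg_aTransform (-A) p
    rwa [neg_neg] at h

theorem spEV_bTransform {b : LinearMap.BilinForm ℝ V} (hb : ∀ x, b x x = 0) (p q : EV V) :
    spEV (bTransform b p) (bTransform b q) = spEV p q := by
  have hskew : b p.1 q.1 + b q.1 p.1 = 0 := by
    simpa [hb] using hb (p.1 + q.1)
  simp only [spEV, bTransform_apply, LinearMap.sub_apply]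
  linear_combination (-1 / 2 : ℝ) * hskew

theorem spEV_aTransform (A : V →ₗ[ℝ] ℝ) (p q : EV V) :
    spEV (aTransform A p) (aTransform A q) = spEV p q := by
  simp only [spEV, aTransform_apply, LinearMap.add_apply, LinearMap.sub_apply,
    LinearMap.smul_apply, smul_eq_mul]
  ring

theorem aTransform_bTransform_generalizedMetric (g b : LinearMap.BilinForm ℝ V)
    (A : V →ₗ[ℝ] ℝ) (X : V) :
    aTransform A (bTransform b (X, b X - g X - A X • A, A X)) = (X, -g X, 0) := by
  ext v
  · rfl
  · simp only [aTransform_apply, bTransform_apply, LinearMap.add_apply, LinearMap.sub_apply,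
      LinearMap.smul_apply, LinearMap.neg_apply, smul_eq_mul]
    ring
  · simp

end EV

open EV in
/-- Lemma 2.2 (fiberwise): the map
`I(X + η + μ) = X + (η − b(X,·) − A(X)A + 2μA) + (μ − A(X))`
is a linear isomorphism of `E(V)` preserving `⟨·,·⟩` and mapping
`E₋ = {X − (g−b)(X,·) − A(X)A + A(X)}` onto `{X − g(X,·)}`. -/
theorem stmt_2 {V : Type*} [AddCommGroup V] [Module ℝ V]
    (g : LinearMap.BilinForm ℝ V)
    (b : LinearMap.BilinForm ℝ V)
    (hbalt : ∀ x, b x x = 0)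
    (A : V →ₗ[ℝ] ℝ) :
    ∃ I : EV V ≃ₗ[ℝ] EV V,
      (∀ (X : V) (η : V →ₗ[ℝ] ℝ) (μ : ℝ),
        I (X, η, μ) = (X, η - b X - A X • A + (2 * μ) • A, μ - A X)) ∧
      (∀ p q : EV V, spEV (I p) (I q) = spEV p q) ∧
      (fun p => I p) '' {p : EV V | ∃ X : V, p = (X, b X - g X - A X • A, A X)}
        = {p : EV V | ∃ X : V, p = (X, -(g X), 0)} := by
  refine ⟨(bTransformEquiv b).trans (aTransformEquiv A), fun X η μ => rfl, fun p q => ?_, ?_⟩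
  · change spEV (aTransform A (bTransform b p)) (aTransform A (bTransform b q)) = spEV p q
    rw [spEV_aTransform, spEV_bTransform hbalt]
  · ext p
    constructor
    · rintro ⟨_, ⟨X, rfl⟩, rfl⟩
      exact ⟨X, aTransform_bTransform_generalizedMetric g b A X⟩
    · rintro ⟨X, rfl⟩
      exact ⟨_, ⟨X, rfl⟩, aTransform_bTransform_generalizedMetric g b A X⟩
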